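/- arXiv:2111.06871 — 2 statements merged into one kernel-verified Lean document; each statement's English description precedes it below -/
import Mathlib

section
/- If λ is an eigenvalue of M^{-1}B with eigenvector u, then for each sign choice ±, the vector (u, (r ± √(r² - 2λ)) u) is an eigenvector of the block matrix A = [[-r I, I], [-2M^{-1}B, r I]] with eigenvalue ±√(r² - 2λ). -/
open Matrix

/-- If `λ` is an eigenvalue of `M⁻¹B` with eigenvector `u`, then for each complex square
root `s` of `r² - 2λ` (i.e. each sign choice `s = ±√(r² - 2λ)`), the vector
`(u, (r + s) u)` is an eigenvector of the block matrix `A = [[-r I, I], [-2M⁻¹B, r I]]`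
with eigenvalue `s`. -/
theorem block_matrix_eigenvector
    {d : ℕ} (B M : Matrix (Fin d) (Fin d) ℝ) (hB : B.PosDef) (hM : M.PosDef)
    (r : ℝ) (lam : ℂ) (u : Fin d → ℂ) (hu : u ≠ 0)
    (heig : ((M⁻¹ * B).map Complex.ofReal).mulVec u = lam • u)
    (s : ℂ) (hs : s ^ 2 = (r : ℂ) ^ 2 - 2 * lam)
    (A : Matrix (Fin d ⊕ Fin d) (Fin d ⊕ Fin d) ℂ)
    (hA : A = Matrix.fromBlocks (-((r : ℂ) • (1 : Matrix (Fin d) (Fin d) ℂ)))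
      1 ((-2 : ℂ) • ((M⁻¹ * B).map Complex.ofReal))
      ((r : ℂ) • (1 : Matrix (Fin d) (Fin d) ℂ))) :
    Sum.elim u (((r : ℂ) + s) • u) ≠ 0 ∧
      A.mulVec (Sum.elim u (((r : ℂ) + s) • u))
        = s • Sum.elim u (((r : ℂ) + s) • u) := by
  constructor
  · intro h
    apply hu
    ext i
    have := congrFun h (Sum.inl i)
    simpa using this
  · subst hA
    rw [fromBlocks_mulVec]
    have h1 : (Sum.elim u (((r : ℂ) + s) • u)) ∘ Sum.inl = u := rfl
    have h2 : (Sum.elim u (((r : ℂ) + s) • u)) ∘ Sum.inr = ((r : ℂ) + s) • u := rfl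
    rw [h1, h2]
    ext i
    cases i with
    | inl i =>
      simp [neg_mulVec, smul_mulVec, one_mulVec]
      ring
    | inr i =>
      have hv := congrFun heig i
      simp only [mulVec_smul, smul_mulVec, one_mulVec, Sum.elim_inr, Pi.add_apply,
        Pi.smul_apply, smul_eq_mul, Sum.elim_inl, hv, Pi.smul_apply, smul_eq_mul]
      have : s * ((r + s) * u i) = (-2 * (lam * u i)) + r * ((r+s) * u i) := by
        have : s * (r + s) = -2 * lam + r * (r + s) := by
          linear_combination hs
        calc s * ((r + s) * u i) = (s * (r+s)) * u i := by ring
          _ = (-2 * lam + r * (r+s)) * u i := by rw [this]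
          _ = (-2 * (lam * u i)) + r * ((r+s) * u i) := by ring
      rw [this]; ring
end

section
/- Leapfrog invariance under constant shift of the mass-scaling schedule: let the leapfrog step with log-mass-scale η, baseline step size ε, step size ε̃ = ε e^{2aη}, and mass e^{2η}M map (x, ṽ) to (x'', ṽ''). If η is replaced by η' = η + c, ε by ε' = ε e^{(1-2a)c}, and the velocity by ṽ' = ṽ e^{-c}, then the resulting leapfrog step produces the same position update: the new position x''(η', ε', ṽ e^{-c}) equals x''(η, ε, ṽ), and the new velocity equals ṽ'' e^{-c}. -/
open Matrix

/-- One leapfrog step with step size `h` and mass matrix `N`. -/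
noncomputable def leapfrogStep {d : ℕ} (gradU : (Fin d → ℝ) → (Fin d → ℝ))
    (h : ℝ) (N : Matrix (Fin d) (Fin d) ℝ)
    (p : (Fin d → ℝ) × (Fin d → ℝ)) : (Fin d → ℝ) × (Fin d → ℝ) :=
  let v' := p.2 - (h / 2) • N⁻¹.mulVec (gradU p.1)
  let x'' := p.1 + h • v'
  (x'', v' - (h / 2) • N⁻¹.mulVec (gradU x''))

/-- Invariance of the leapfrog step under a constant shift of the mass-scaling schedule:
replacing `η` by `η + c`, the baseline step size `ε` by `ε e^{(1-2a)c}` (so that the step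
size `ε̃ = ε e^{2aη}` becomes `ε̃ e^c`), and the velocity `ṽ` by `ṽ e^{-c}` produces the
same position update, and the resulting velocity is the original one scaled by `e^{-c}`. -/
theorem leapfrog_shift_invariance
    {d : ℕ} (U : (Fin d → ℝ) → ℝ) (gradU : (Fin d → ℝ) → (Fin d → ℝ))
    (hU : Differentiable ℝ U)
    (hgrad : ∀ x y, fderiv ℝ U x y = gradU x ⬝ᵥ y)
    (M : Matrix (Fin d) (Fin d) ℝ) (hMsymm : M.IsSymm) (hM : IsUnit M)
    (a c ε η : ℝ) (hε : 0 < ε)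
    (x v : Fin d → ℝ) :
    (leapfrogStep gradU ((ε * Real.exp ((1 - 2 * a) * c)) * Real.exp (2 * a * (η + c)))
        (Real.exp (2 * (η + c)) • M) (x, Real.exp (-c) • v)).1
      = (leapfrogStep gradU (ε * Real.exp (2 * a * η)) (Real.exp (2 * η) • M) (x, v)).1
    ∧ (leapfrogStep gradU ((ε * Real.exp ((1 - 2 * a) * c)) * Real.exp (2 * a * (η + c)))
        (Real.exp (2 * (η + c)) • M) (x, Real.exp (-c) • v)).2
      = Real.exp (-c) •
          (leapfrogStep gradU (ε * Real.exp (2 * a * η)) (Real.exp (2 * η) • M) (x, v)).2 := by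
  have hdet : IsUnit M.det := (Matrix.isUnit_iff_isUnit_det M).mp hM
  have hinv : ∀ t : ℝ, (Real.exp t • M)⁻¹ = Real.exp (-t) • M⁻¹ := by
    intro t
    letI : Invertible (Real.exp t) := invertibleOfNonzero (Real.exp_ne_zero t)
    rw [Matrix.inv_smul (A := M) (Real.exp t) hdet, invOf_eq_inv, ← Real.exp_neg]
  -- step size identity
  have hh : (ε * Real.exp ((1 - 2 * a) * c)) * Real.exp (2 * a * (η + c))
      = (ε * Real.exp (2 * a * η)) * Real.exp c := by
    have e : (1 - 2 * a) * c + 2 * a * (η + c) = 2 * a * η + c := by ring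
    rw [mul_assoc, ← Real.exp_add, e, Real.exp_add, ← mul_assoc]
  set h := ε * Real.exp (2 * a * η) with hhdef
  rw [hh]
  simp only [leapfrogStep]
  rw [hinv (2 * (η + c)), hinv (2 * η)]
  set K := M⁻¹.mulVec (gradU x) with hK
  have hs : h * Real.exp c / 2 * Real.exp (-(2 * (η + c)))
      = Real.exp (-c) * (h / 2) * Real.exp (-(2 * η)) := by
    rw [show h * Real.exp c / 2 * Real.exp (-(2 * (η + c)))
        = h / 2 * (Real.exp c * Real.exp (-(2 * (η + c)))) by ring,
      show Real.exp (-c) * (h / 2) * Real.exp (-(2 * η))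
        = h / 2 * (Real.exp (-c) * Real.exp (-(2 * η))) by ring,
      ← Real.exp_add, ← Real.exp_add]
    congr 1
    ring
  have hv' : Real.exp (-c) • v - (h * Real.exp c / 2) • (Real.exp (-(2 * (η + c))) • M⁻¹).mulVec (gradU x)
      = Real.exp (-c) • (v - (h / 2) • (Real.exp (-(2 * η)) • M⁻¹).mulVec (gradU x)) := by
    simp only [Matrix.smul_mulVec, smul_sub, smul_smul, hs]
    ring_nf
  have hx : x + (h * Real.exp c) • (Real.exp (-c) • (v - (h / 2) • (Real.exp (-(2 * η)) • M⁻¹).mulVec (gradU x)))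
      = x + h • (v - (h / 2) • (Real.exp (-(2 * η)) • M⁻¹).mulVec (gradU x)) := by
    congr 1
    rw [smul_smul, mul_assoc, ← Real.exp_add]
    simp
  rw [hv', hx]
  refine ⟨rfl, ?_⟩
  set y := x + h • (v - (h / 2) • (Real.exp (-(2 * η)) • M⁻¹).mulVec (gradU x))
  simp only [Matrix.smul_mulVec, smul_sub, smul_smul, hs]
  ring_nf
end
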